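/- arXiv:math/0504364 — 2 statements merged into one kernel-verified Lean document; each statement's English description precedes it below -/
import Mathlib

section
/- Triangularity of Kostka support: define partitions λ̄ of length ≤ r+1 by λ̄_β = m^{(r)} + λ_β (adding m^{(r)} columns of height r+1 to λ), where λ_β = ∑_{α ≥ β} l_α, and μ̄ = ν(μ) with μ̄_β = ∑_{α ≥ β} n^{(α)}. If m = C_r^{-1}(n - l) has all entries nonnegative, then λ̄ ⊴ μ̄ in dominance order: ∑_{α=1}^β λ̄_α ≤ ∑_{α=1}^β μ̄_α for all β ≤ r+1, with equality at β = r+1. -/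
open Finset

/-- The Cartan matrix of `sl_{r+1}` over ℤ. -/
def cartanSLZ (r : ℕ) : Matrix (Fin r) (Fin r) ℤ :=
  Matrix.of fun i j =>
    if i = j then 2 else if (i : ℕ) + 1 = (j : ℕ) ∨ (j : ℕ) + 1 = (i : ℕ) then -1 else 0

private lemma aux_sum {r : ℕ} (m : Fin r → ℤ) (j : ℕ) :
    (∑ γ : Fin r, if (γ : ℕ) = j then m γ else 0) = if h : j < r then m ⟨j, h⟩ else 0 := by
  by_cases h : j < r
  · rw [dif_pos h]
    have he : ∀ γ : Fin r, ((γ : ℕ) = j) ↔ (γ = ⟨j, h⟩) := fun γ => by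
      rw [Fin.ext_iff]
    simp_rw [he]
    rw [Finset.sum_ite_eq' univ (⟨j, h⟩ : Fin r) m, if_pos (mem_univ _)]
  · rw [dif_neg h]
    apply Finset.sum_eq_zero
    intro γ _
    rw [if_neg]
    have := γ.2
    omega

private lemma fin_filter_sum (r : ℕ) (p : ℕ → Prop) [DecidablePred p] (h : ℕ → ℤ) :
    ∑ α ∈ Finset.univ.filter (fun α : Fin r => p (α : ℕ)), h (α : ℕ)
      = ∑ k ∈ (Finset.range r).filter p, h k := by
  rw [Finset.sum_filter, Finset.sum_filter,
    ← Fin.sum_univ_eq_sum_range (fun k => if p k then h k else 0)]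

/-- Triangularity of the Kostka support.  With `λ_β = ∑_{α ≥ β} l_α`,
`μ̄_β = ∑_{α ≥ β} n_α` and `λ̄_β = m⁽ʳ⁾ + λ_β` (adding `m⁽ʳ⁾` columns of height `r+1`),
if `m = C_r⁻¹(n - l)` has all entries nonnegative then `λ̄ ⊴ μ̄` in dominance order:
all partial sums satisfy `∑_{α ≤ β} λ̄_α ≤ ∑_{α ≤ β} μ̄_α`, with equality for the full sums. -/
theorem stmt_9 (r : ℕ) (hr : 0 < r) (n l : Fin r → ℕ) (m : Fin r → ℤ)
    (hm : (cartanSLZ r).mulVec m = (fun α => (n α : ℤ) - (l α : ℤ)))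
    (hpos : ∀ α, 0 ≤ m α) :
    -- `λ̄, μ̄ : Fin (r+1) → ℤ`, 0-based position `β` is row `β+1`
    (∀ β : Fin (r + 1),
      (∑ γ ∈ Finset.univ.filter (fun γ : Fin (r + 1) => (γ : ℕ) ≤ (β : ℕ)),
        (m ⟨r - 1, by omega⟩ +
          ∑ α ∈ Finset.univ.filter (fun α : Fin r => (γ : ℕ) ≤ (α : ℕ)), (l α : ℤ)))
      ≤ ∑ γ ∈ Finset.univ.filter (fun γ : Fin (r + 1) => (γ : ℕ) ≤ (β : ℕ)),
          (∑ α ∈ Finset.univ.filter (fun α : Fin r => (γ : ℕ) ≤ (α : ℕ)), (n α : ℤ)))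
    ∧ (∑ γ : Fin (r + 1),
        (m ⟨r - 1, by omega⟩ +
          ∑ α ∈ Finset.univ.filter (fun α : Fin r => (γ : ℕ) ≤ (α : ℕ)), (l α : ℤ)))
      = ∑ γ : Fin (r + 1),
          (∑ α ∈ Finset.univ.filter (fun α : Fin r => (γ : ℕ) ≤ (α : ℕ)), (n α : ℤ)) := by
  -- the extended `m`-vector : `f (k+1) = m k` for `k < r`, `f 0 = 0`, `f k = 0` for `k > r`
  set f : ℕ → ℤ := fun k => if h : 0 < k ∧ k ≤ r then m ⟨k - 1, by omega⟩ else 0 with hfdef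
  have hf0 : f 0 = 0 := by simp [hfdef]
  have hfr1 : f (r + 1) = 0 := by
    simp only [hfdef]; rw [dif_neg]; omega
  have hfd : ∀ j : ℕ, f (j + 1) = if h : j < r then m ⟨j, h⟩ else 0 := by
    intro j
    by_cases h : j < r
    · simp only [hfdef]
      rw [dif_pos ⟨by omega, by omega⟩, dif_pos h]
      exact congrArg m (Fin.ext (by simp))
    · simp only [hfdef]
      rw [dif_neg (by omega), dif_neg h]
  have hfr : f r = m ⟨r - 1, by omega⟩ := by
    simp only [hfdef]
    rw [dif_pos ⟨hr, le_refl r⟩]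
  have hfnonneg : ∀ j : ℕ, 0 ≤ f j := by
    intro j
    simp only [hfdef]
    split_ifs with h
    · exact hpos _
    · exact le_refl 0
  -- the difference `n - l` as a second difference of `f`
  have hd : ∀ α : Fin r, (n α : ℤ) - (l α : ℤ)
      = (f ((α : ℕ) + 1) - f (α : ℕ)) - (f ((α : ℕ) + 2) - f ((α : ℕ) + 1)) := by
    intro α
    have h1 := congrFun hm α
    rw [Matrix.mulVec, dotProduct] at h1
    rw [← h1]
    have hsplit : ∀ γ : Fin r, cartanSLZ r α γ * m γ
        = (if γ = α then 2 * m γ else 0)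
          + ((if (γ : ℕ) = (α : ℕ) + 1 then -m γ else 0)
            + (if (γ : ℕ) = (α : ℕ) - 1 ∧ 0 < (α : ℕ) then -m γ else 0)) := by
      intro γ
      simp only [cartanSLZ, Matrix.of_apply, Fin.ext_iff]
      split_ifs <;> first | ring1 | omega
    rw [Finset.sum_congr rfl (fun γ _ => hsplit γ), Finset.sum_add_distrib,
      Finset.sum_add_distrib]
    have hA : (∑ γ : Fin r, if γ = α then 2 * m γ else 0) = 2 * m α := by
      rw [Finset.sum_ite_eq' univ α (fun γ => 2 * m γ), if_pos (mem_univ _)]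
    have hB : (∑ γ : Fin r, if (γ : ℕ) = (α : ℕ) + 1 then -m γ else 0)
        = -f ((α : ℕ) + 2) := by
      rw [aux_sum (fun γ => -m γ) ((α : ℕ) + 1)]
      rw [show (α : ℕ) + 2 = ((α : ℕ) + 1) + 1 from rfl, hfd ((α : ℕ) + 1)]
      split_ifs with h
      · rfl
      · simp
    have hC : (∑ γ : Fin r, if (γ : ℕ) = (α : ℕ) - 1 ∧ 0 < (α : ℕ) then -m γ else 0)
        = -f (α : ℕ) := by
      rcases Nat.eq_zero_or_pos (α : ℕ) with h0 | h0
      · rw [h0, hf0]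
        apply Finset.sum_eq_zero
        intro γ _
        rw [if_neg]
        omega
      · have he : ∀ γ : Fin r, ((γ : ℕ) = (α : ℕ) - 1 ∧ 0 < (α : ℕ))
            ↔ ((γ : ℕ) = (α : ℕ) - 1) := fun γ => by omega
        simp_rw [he]
        rw [aux_sum (fun γ => -m γ) ((α : ℕ) - 1)]
        have hlt : (α : ℕ) - 1 < r := by have := α.2; omega
        rw [dif_pos hlt]
        have hfa : f (α : ℕ) = m ⟨(α : ℕ) - 1, hlt⟩ := by
          simp only [hfdef]
          rw [dif_pos ⟨h0, by have := α.2; omega⟩]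
        rw [hfa]
    rw [hA, hB, hC]
    have hfa : f ((α : ℕ) + 1) = m α := by
      rw [hfd (α : ℕ), dif_pos α.2]
    rw [hfa]
    ring
  -- tail sums of `n - l` telescope
  have hT : ∀ γ : ℕ, γ ≤ r →
      (∑ α ∈ Finset.univ.filter (fun α : Fin r => γ ≤ (α : ℕ)), ((n α : ℤ) - (l α : ℤ)))
        = (f (γ + 1) - f γ) + f r := by
    intro γ hγ
    have hcong : ∀ α ∈ Finset.univ.filter (fun α : Fin r => γ ≤ (α : ℕ)),
        (n α : ℤ) - (l α : ℤ)
          = (fun k => (f (k + 1) - f k) - (f (k + 2) - f (k + 1))) (α : ℕ) := by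
      intro α _
      exact hd α
    rw [Finset.sum_congr rfl hcong,
      fin_filter_sum r (fun k => γ ≤ k) (fun k => (f (k + 1) - f k) - (f (k + 2) - f (k + 1)))]
    have hrange : (Finset.range r).filter (fun k => γ ≤ k) = Finset.Ico γ r := by
      ext k
      simp only [Finset.mem_filter, Finset.mem_range, Finset.mem_Ico]
      omega
    rw [hrange, Finset.sum_Ico_eq_sum_range]
    have hcong2 : ∀ j ∈ Finset.range (r - γ),
        (f ((γ + j) + 1) - f (γ + j)) - (f ((γ + j) + 2) - f ((γ + j) + 1))
          = (fun i => f (γ + i + 1) - f (γ + i)) j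
            - (fun i => f (γ + i + 1) - f (γ + i)) (j + 1) := by
      intro j _
      simp only
      have e1 : γ + (j + 1) + 1 = (γ + j) + 2 := by omega
      have e2 : γ + (j + 1) = (γ + j) + 1 := by omega
      rw [e1, e2]
    rw [Finset.sum_congr rfl hcong2,
      Finset.sum_range_sub' (fun i => f (γ + i + 1) - f (γ + i)) (r - γ)]
    have e3 : γ + (r - γ) = r := by omega
    have e4 : γ + (r - γ) + 1 = r + 1 := by omega
    simp only [e3, e4, hfr1]
    ring_nf
  -- partial sums of the difference
  have key : ∀ b : ℕ, b ≤ r →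
      (∑ γ ∈ Finset.univ.filter (fun γ : Fin (r + 1) => (γ : ℕ) ≤ b),
          (∑ α ∈ Finset.univ.filter (fun α : Fin r => (γ : ℕ) ≤ (α : ℕ)), (n α : ℤ)))
        - (∑ γ ∈ Finset.univ.filter (fun γ : Fin (r + 1) => (γ : ℕ) ≤ b),
          (m ⟨r - 1, by omega⟩ +
            ∑ α ∈ Finset.univ.filter (fun α : Fin r => (γ : ℕ) ≤ (α : ℕ)), (l α : ℤ)))
        = f (b + 1) := by
    intro b hb
    rw [← Finset.sum_sub_distrib]
    have hterm : ∀ γ ∈ Finset.univ.filter (fun γ : Fin (r + 1) => (γ : ℕ) ≤ b),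
        (∑ α ∈ Finset.univ.filter (fun α : Fin r => (γ : ℕ) ≤ (α : ℕ)), (n α : ℤ))
          - (m ⟨r - 1, by omega⟩ +
            ∑ α ∈ Finset.univ.filter (fun α : Fin r => (γ : ℕ) ≤ (α : ℕ)), (l α : ℤ))
          = (fun k => f (k + 1) - f k) (γ : ℕ) := by
      intro γ _
      have hγr : (γ : ℕ) ≤ r := by have := γ.2; omega
      have : (∑ α ∈ Finset.univ.filter (fun α : Fin r => (γ : ℕ) ≤ (α : ℕ)), (n α : ℤ))
          - (∑ α ∈ Finset.univ.filter (fun α : Fin r => (γ : ℕ) ≤ (α : ℕ)), (l α : ℤ))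
          = (f ((γ : ℕ) + 1) - f (γ : ℕ)) + f r := by
        rw [← Finset.sum_sub_distrib]
        exact hT (γ : ℕ) hγr
      rw [← hfr]
      simp only
      linarith [this]
    rw [Finset.sum_congr rfl hterm,
      fin_filter_sum (r + 1) (fun k => k ≤ b) (fun k => f (k + 1) - f k)]
    have hrange : (Finset.range (r + 1)).filter (fun k => k ≤ b) = Finset.range (b + 1) := by
      ext k
      simp only [Finset.mem_filter, Finset.mem_range]
      omega
    rw [hrange, Finset.sum_range_sub f (b + 1), hf0, sub_zero]
  constructor
  · intro β
    have hβ : (β : ℕ) ≤ r := by have := β.2; omega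
    have := key (β : ℕ) hβ
    have h0 := hfnonneg ((β : ℕ) + 1)
    linarith
  · have huniv : (Finset.univ : Finset (Fin (r + 1)))
        = Finset.univ.filter (fun γ : Fin (r + 1) => (γ : ℕ) ≤ r) := by
      rw [Finset.filter_true_of_mem]
      intro γ _
      have := γ.2
      omega
    have := key r (le_refl r)
    rw [huniv]
    rw [hfr1] at this
    linarith
end

section
/- The symmetrization argument: let μ be a partition with rows indexed by (a,i) (length a, multiplicity index i), and assign distinct variables x_{a,i,j} to cells. Let f be the product over pairs of rows (a,i) > (a',i') of (x_{a,i,j} - x_{a',i',j})(x_{a,i,j+1} - x_{a',i',j}) over columns j of the shorter row (indices cyclic within rows). Then under the evaluation x_{a,i,j} ↦ y_{a,i}, the only permutations σ of the variables for which f(σ(x)) evaluates to a nonzero value are those permuting variables within rows or exchanging entire rows of equal length. -/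
/-!
Write `g c` for the row to which `σ` sends the cell `c`. The evaluated product is nonzero iff
`g` separates every pair of cells linked by a factor of `f`, and since `σ` is a bijection the
fiber `g⁻¹ r` has `len r` cells. Let `t₁` be the greatest row (for `rowGT`) met by a fiber.
Linked cells give the fiber at most one cell per column of `t₁`, and if the fiber misses a cell
of `t₁` then it misses a whole column, one whose cyclic successor in `t₁` it contains; so it has
fewer than `len t₁` cells. Going down through the row lengths, the fiber of a row `r` of length
`L` can only meet rows of length at most `L`, so it is a whole row of length `L`; as distinct
`r` have distinct fibers, every row of length `L` arises this way.
-/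
open MvPolynomial

/-- Ordering of rows of a Young diagram: `(a,i) > (a',i')` iff the row is longer, or
of equal length and earlier in the given enumeration. -/
def rowGT {R : ℕ} (len : Fin R → ℕ) (s t : Fin R) : Prop :=
  len t < len s ∨ (len s = len t ∧ s < t)

instance {R : ℕ} (len : Fin R → ℕ) (s t : Fin R) : Decidable (rowGT len s t) := by
  unfold rowGT; infer_instance

/-- The prefactor `f(x) = ∏_{(a,i) > (a',i')} ∏_j (x_{(a,i),j} - x_{(a',i'),j})
(x_{(a,i),j+1} - x_{(a',i'),j})` linking each pair of rows in adjacent columns, the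
column index `j+1` being cyclic within the longer row.  Variables are indexed by cells
`⟨s, j⟩` of the diagram with rows `s : Fin R` of length `len s`. -/
noncomputable def rowLinkPoly (R : ℕ) (len : Fin R → ℕ) (hlen : ∀ s, 0 < len s) :
    MvPolynomial (Σ s : Fin R, Fin (len s)) ℚ :=
  ∏ s : Fin R, ∏ t : Fin R,
    if h : rowGT len s t then
      ∏ j : Fin (len t),
        (X ⟨s, ⟨(j : ℕ), by rcases h with h | ⟨h, _⟩ <;> omega⟩⟩ - X ⟨t, j⟩) *
        (X ⟨s, ⟨((j : ℕ) + 1) % len s, Nat.mod_lt _ (hlen s)⟩⟩ - X ⟨t, j⟩)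
    else 1

open Finset

section RowOrder

variable {R : ℕ} {len : Fin R → ℕ} {s t : Fin R}

def rowKey (len : Fin R → ℕ) (s : Fin R) : Lex (ℕᵒᵈ × Fin R) :=
  toLex (OrderDual.toDual (len s), s)

theorem rowGT_iff_rowKey_lt : rowGT len s t ↔ rowKey len s < rowKey len t := by
  simp only [rowGT, rowKey, Prod.Lex.toLex_lt_toLex, OrderDual.toDual_lt_toDual]
  rfl

theorem rowKey_injective : Function.Injective (rowKey len) := fun _ _ h =>
  congrArg Prod.snd (toLex.injective h)

theorem rowGT.ne (h : rowGT len s t) : s ≠ t := by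
  rintro rfl
  exact lt_irrefl _ (rowGT_iff_rowKey_lt.1 h)

theorem rowGT.len_le (h : rowGT len s t) : len t ≤ len s := by
  rcases h with h | ⟨h, -⟩ <;> omega

theorem rowGT_or_rowGT_of_ne (h : s ≠ t) : rowGT len s t ∨ rowGT len t s := by
  simp only [rowGT_iff_rowKey_lt]
  exact lt_or_gt_of_ne (rowKey_injective.ne h)

end RowOrder

theorem card_filter_fst_eq {R : ℕ} (len : Fin R → ℕ) (r : Fin R) :
    #(univ.filter fun c : Σ s : Fin R, Fin (len s) => c.1 = r) = len r := by
  rw [← Fintype.card_subtype, Fintype.card_congr (Equiv.sigmaSubtype r), Fintype.card_fin]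

theorem exists_not_and_succ_mod {n a b : ℕ} {p : ℕ → Prop} (ha : a < n) (hpa : p a)
    (hb : b < n) (hpb : ¬ p b) : ∃ j < n, ¬ p j ∧ p ((j + 1) % n) := by
  by_contra! hclosed
  have hnot : ∀ k, ¬ p ((b + k) % n) := by
    intro k
    induction k with
    | zero => rwa [add_zero, Nat.mod_eq_of_lt hb]
    | succ k ih =>
      have := hclosed _ (Nat.mod_lt _ (by omega)) ih
      rwa [Nat.mod_add_mod, add_assoc] at this
  apply hnot (a + n - b)
  rwa [show b + (a + n - b) = a + n by omega, Nat.add_mod_right, Nat.mod_eq_of_lt ha]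

def RowLinked {R : ℕ} {len : Fin R → ℕ} {β : Type*} (g : (Σ s : Fin R, Fin (len s)) → β) :
    Prop :=
  ∀ s t (h : rowGT len s t) (j : Fin (len t)),
    g ⟨s, ⟨j, j.2.trans_le h.len_le⟩⟩ ≠ g ⟨t, j⟩ ∧
      g ⟨s, ⟨(j + 1) % len s, Nat.mod_lt _ (j.pos.trans_le h.len_le)⟩⟩ ≠ g ⟨t, j⟩

theorem aeval_rowLinkPoly_ne_zero_iff {R : ℕ} {len : Fin R → ℕ} (hlen : ∀ s, 0 < len s)
    {σ : Type*} (g : (Σ s : Fin R, Fin (len s)) → σ) :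
    aeval (fun c => (X (g c) : MvPolynomial σ ℚ)) (rowLinkPoly R len hlen) ≠ 0 ↔ RowLinked g := by
  simp only [rowLinkPoly, map_prod, apply_dite (aeval _), map_mul, map_sub, aeval_X, map_one,
    prod_ne_zero_iff, mem_univ, forall_const, ne_eq]
  refine forall₂_congr fun s t => ?_
  by_cases h : rowGT len s t
  · simp only [dif_pos h, prod_eq_zero_iff, mul_eq_zero, sub_eq_zero, X_inj, not_exists,
      not_or, mem_univ, true_and, forall_prop_of_true h, ne_eq]
  · simp [h]

section Fibers

variable {R : ℕ} {len : Fin R → ℕ} {β : Type*} {g : (Σ s : Fin R, Fin (len s)) → β}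

theorem RowLinked.ne_of_val_eq (hg : RowLinked g) {s t : Fin R} (hst : s ≠ t)
    (i : Fin (len s)) (j : Fin (len t)) (hij : (i : ℕ) = j) : g ⟨s, i⟩ ≠ g ⟨t, j⟩ := by
  rcases rowGT_or_rowGT_of_ne (len := len) hst with h | h
  · rw [show i = ⟨j, j.2.trans_le h.len_le⟩ from Fin.ext hij]
    exact (hg s t h j).1
  · rw [show j = ⟨i, i.2.trans_le h.len_le⟩ from Fin.ext hij.symm]
    exact (hg t s h i).1.symm

variable (g) in
def IsRowFiber (r : β) (t : Fin R) : Prop :=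
  ∀ c, g c = r ↔ c.1 = t

theorem IsRowFiber.eq {r r' : β} {t : Fin R} (h : IsRowFiber g r t) (h' : IsRowFiber g r' t)
    (ht : 0 < len t) : r = r' :=
  ((h ⟨t, ⟨0, ht⟩⟩).2 rfl).symm.trans ((h' _).2 rfl)

theorem card_fiber_lt_or_isRowFiber [DecidableEq β] (hg : RowLinked g) {r : β} {t₁ : Fin R}
    (hmeet : ∃ j, g ⟨t₁, j⟩ = r) (hmax : ∀ c, g c = r → c.1 ≠ t₁ → rowGT len t₁ c.1) :
    #(univ.filter (g · = r)) < len t₁ ∨ IsRowFiber g r t₁ := by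
  set F := univ.filter (g · = r)
  have hcol : Set.InjOn (fun c : Σ s : Fin R, Fin (len s) => (c.2 : ℕ)) F := by
    rintro ⟨s, i⟩ hi ⟨t, j⟩ hj (hij : (i : ℕ) = j)
    simp only [coe_filter, mem_univ, true_and, Set.mem_ofPred_eq, F] at hi hj
    by_cases hst : s = t
    · subst hst
      rw [Fin.ext hij]
    · exact absurd (hi.trans hj.symm) (hg.ne_of_val_eq hst i j hij)
  have hsub : F.image (fun c => (c.2 : ℕ)) ⊆ range (len t₁) := by
    intro x hx
    obtain ⟨⟨s, i⟩, hc, rfl⟩ := mem_image.1 hx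
    by_cases hs : s = t₁
    · subst hs
      exact mem_range.2 i.2
    · exact mem_range.2 (i.2.trans_le (hmax _ (mem_filter.1 hc).2 hs).len_le)
  by_cases hfull : ∀ j, g ⟨t₁, j⟩ = r
  · right
    rintro ⟨s, i⟩
    refine ⟨fun hc => ?_, by rintro rfl; exact hfull i⟩
    by_contra hs
    exact hg.ne_of_val_eq hs i ⟨i, i.2.trans_le (hmax _ hc hs).len_le⟩ rfl
      (hc.trans (hfull _).symm)
  · left
    obtain ⟨a, ha⟩ := hmeet
    obtain ⟨b, hb⟩ := not_forall.1 hfull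
    obtain ⟨j, hjn, hj, hj_succ_lt, hj_succ⟩ :=
      exists_not_and_succ_mod (p := fun j => ∃ h : j < len t₁, g ⟨t₁, ⟨j, h⟩⟩ = r)
        a.2 ⟨a.2, ha⟩ b.2 (fun ⟨_, h⟩ => hb h)
    have hmiss : j ∉ F.image (fun c => (c.2 : ℕ)) := by
      intro hx
      obtain ⟨⟨s, i⟩, hc, rfl⟩ := mem_image.1 hx
      replace hc : g ⟨s, i⟩ = r := (mem_filter.1 hc).2
      by_cases hs : s = t₁
      · subst hs
        exact hj ⟨i.2, hc⟩
      · exact (hg t₁ s (hmax _ hc hs) i).2 (hj_succ.trans hc.symm)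
    calc #F = #(F.image fun c => (c.2 : ℕ)) := (card_image_of_injOn hcol).symm
      _ < #(range (len t₁)) :=
        card_lt_card ((ssubset_iff_of_subset hsub).2 ⟨j, mem_range.2 hjn, hmiss⟩)
      _ = len t₁ := card_range _

theorem rowLinked_of_forall_eq {τ : Fin R → β} (hτ : Function.Injective τ)
    (hg : ∀ c, g c = τ c.1) : RowLinked g := fun _ _ h _ => by
  simp only [hg]
  exact ⟨hτ.ne h.ne, hτ.ne h.ne⟩

end Fibers

section RowColoring

variable {R : ℕ} {len : Fin R → ℕ} {g : (Σ s : Fin R, Fin (len s)) → Fin R} {r : Fin R}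
  {t : Fin R}

theorem IsRowFiber.card_eq (h : IsRowFiber g r t) : #(univ.filter (g · = r)) = len t := by
  rw [filter_congr fun c _ => h c]
  exact card_filter_fst_eq len t

variable (hlen : ∀ s, 0 < len s) (hg : RowLinked g)
  (hfib : ∀ r, #(univ.filter (g · = r)) = len r)
include hlen hg hfib

theorem exists_isRowFiber_of_len_eq {L : ℕ} (hlonger : ∀ t, L < len t → ∃ r, IsRowFiber g r t)
    (hr : len r = L) : ∃ t, len t = L ∧ IsRowFiber g r t := by
  have hcard := hfib r
  have hne : (univ.filter fun s => ∃ j, g ⟨s, j⟩ = r).Nonempty := by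
    obtain ⟨c, hc⟩ := card_pos.1 (hcard.symm ▸ hlen r)
    exact ⟨c.1, mem_filter.2 ⟨mem_univ _, c.2, (mem_filter.1 hc).2⟩⟩
  obtain ⟨t₁, ht₁, hmin⟩ := exists_min_image _ (rowKey len) hne
  have hmax : ∀ c, g c = r → c.1 ≠ t₁ → rowGT len t₁ c.1 := fun c hc hct =>
    rowGT_iff_rowKey_lt.2 <| (hmin c.1 (mem_filter.2 ⟨mem_univ _, c.2, hc⟩)).lt_of_ne
      (rowKey_injective.ne hct.symm)
  have hmeet := (mem_filter.1 ht₁).2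
  have ht₁_le : len t₁ ≤ L := by
    by_contra! hlt
    obtain ⟨r', hr'⟩ := hlonger t₁ hlt
    obtain ⟨j, hj⟩ := hmeet
    obtain rfl : r' = r := ((hr' _).2 rfl).symm.trans hj
    have := hr'.card_eq
    omega
  rcases card_fiber_lt_or_isRowFiber hg hmeet hmax with hlt | hfiber
  · omega
  · exact ⟨t₁, by have := hfiber.card_eq; omega, hfiber⟩

theorem exists_isRowFiber_of_longer (hlonger : ∀ t', len t < len t' → ∃ r, IsRowFiber g r t') :
    ∃ r, IsRowFiber g r t := by
  choose φ hφ_len hφ using fun r : {s // len s = len t} =>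
    exists_isRowFiber_of_len_eq hlen hg hfib hlonger r.2
  have hinj : Function.Injective fun r => (⟨φ r, hφ_len r⟩ : {s // len s = len t}) :=
    fun r r' h => by
      have e : φ r = φ r' := congrArg Subtype.val h
      exact Subtype.ext <| (hφ r).eq (e ▸ hφ r') (hlen _)
  obtain ⟨r, hr⟩ := Finite.injective_iff_surjective.1 hinj ⟨t, rfl⟩
  have e : φ r = t := congrArg Subtype.val hr
  exact ⟨r, fun c => (hφ r c).trans (by rw [e])⟩

theorem exists_isRowFiber (s : Fin R) : ∃ r, IsRowFiber g r s := by
  induction hn : univ.sup len - len s using Nat.strong_induction_on generalizing s with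
  | _ n ih =>
    refine exists_isRowFiber_of_longer hlen hg hfib fun t' ht' => ih _ ?_ t' rfl
    have := le_sup (f := len) (mem_univ t')
    omega

theorem exists_perm_of_rowLinked :
    ∃ τ : Equiv.Perm (Fin R), (∀ s, len (τ s) = len s) ∧ ∀ c, g c = τ c.1 := by
  choose τ hτ using exists_isRowFiber hlen hg hfib
  have hinj : Function.Injective τ := fun s t h =>
    (hτ t ⟨s, ⟨0, hlen s⟩⟩).1 (h ▸ (hτ s _).2 rfl)
  exact ⟨Equiv.ofBijective τ (Finite.injective_iff_bijective.1 hinj),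
    fun s => (hfib _).symm.trans (hτ s).card_eq, fun c => (hτ c.1 c).2 rfl⟩

end RowColoring

theorem card_filter_perm_fst_eq {R : ℕ} {len : Fin R → ℕ}
    (σ : Equiv.Perm (Σ s : Fin R, Fin (len s))) (r : Fin R) :
    #(univ.filter fun c => (σ c).1 = r) = len r :=
  (card_equiv σ (by simp)).trans (card_filter_fst_eq len r)

/-- under the evaluation `x_{(a,i),j} ↦ y_{(a,i)}` (sending each cell to
the variable of its row), a permutation `σ` of the cells makes `f∘σ` evaluate to a
nonzero function exactly when `σ` permutes variables within rows or exchanges entire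
rows of equal length, i.e. when `σ` covers a length-preserving permutation `τ` of rows. -/
theorem stmt_17 (R : ℕ) (len : Fin R → ℕ) (hlen : ∀ s, 0 < len s)
    (σ : Equiv.Perm (Σ s : Fin R, Fin (len s))) :
    aeval (fun c : Σ s : Fin R, Fin (len s) => (X c.1 : MvPolynomial (Fin R) ℚ))
        (rename σ (rowLinkPoly R len hlen)) ≠ 0
    ↔ ∃ τ : Equiv.Perm (Fin R), (∀ s, len (τ s) = len s) ∧
        ∀ c : Σ s : Fin R, Fin (len s), (σ c).1 = τ c.1 := by
  rw [aeval_rename]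
  refine (aeval_rowLinkPoly_ne_zero_iff hlen fun c => (σ c).1).trans ⟨fun hg => ?_, ?_⟩
  · exact exists_perm_of_rowLinked hlen hg (card_filter_perm_fst_eq σ)
  · rintro ⟨τ, -, hτ⟩
    exact rowLinked_of_forall_eq τ.injective hτ
end
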